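/- arXiv:1010.5303 — 3 statements merged into one kernel-verified Lean document; each statement's English description precedes it below -/
import Mathlib

section
/- If E is a doubly even binary code of length 8n, then for all u, v in the extended doubling 𝒟(E), the weight of u+v is congruent to 0 modulo 8. -/
open Module

/-- Hamming weight of a binary word. -/
def wt {N : ℕ} (c : Fin N → ZMod 2) : ℕ := (Finset.univ.filter fun i => c i ≠ 0).card

/-- The doubling map d(a₁,...,a_N) = (a₁,a₁,...,a_N,a_N). -/
def dmap {N : ℕ} (a : Fin N → ZMod 2) : Fin (2 * N) → ZMod 2 :=
  fun j => a ⟨j.val / 2, by have := j.isLt; omega⟩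

/-- The vector ℓ(1^N) = (1,0,1,0,...,1,0). -/
def ellOne (N : ℕ) : Fin (2 * N) → ZMod 2 := fun j => if j.val % 2 = 0 then 1 else 0

/-- The extended doubling 𝒟(E) of a binary code E. -/
def ExtDoubling {N : ℕ} (E : Submodule (ZMod 2) (Fin N → ZMod 2)) :
    Submodule (ZMod 2) (Fin (2 * N) → ZMod 2) :=
  Submodule.span (ZMod 2) (insert (ellOne N) (dmap '' (E : Set (Fin N → ZMod 2))))

def DoublyEven {N : ℕ} (E : Submodule (ZMod 2) (Fin N → ZMod 2)) : Prop :=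
  ∀ c ∈ E, 4 ∣ wt c

def pairEquiv (N : ℕ) : Fin N × Fin 2 ≃ Fin (2 * N) where
  toFun p := ⟨2 * p.1.val + p.2.val, by have := p.1.isLt; have := p.2.isLt; omega⟩
  invFun j := (⟨j.val / 2, by have := j.isLt; omega⟩, ⟨j.val % 2, by omega⟩)
  left_inv p := by
    ext
    · simp; omega
    · simp; omega
  right_inv j := by
    ext; simp; omega

lemma wt_sum {N : ℕ} (c : Fin N → ZMod 2) :
    wt c = ∑ j : Fin N, if c j ≠ 0 then 1 else 0 := by
  rw [wt, Finset.card_filter]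

lemma wt_dmap {N : ℕ} (a : Fin N → ZMod 2) : wt (dmap a) = 2 * wt a := by
  rw [wt_sum, wt_sum, ← Fintype.sum_equiv (pairEquiv N)
    (fun p => if dmap a (pairEquiv N p) ≠ 0 then 1 else 0) _ (fun p => rfl)]
  rw [Fintype.sum_prod_type]
  have key : ∀ (i : Fin N) (k : Fin 2), dmap a (pairEquiv N (i, k)) = a i := by
    intro i k
    have hk := k.isLt
    simp only [dmap, pairEquiv, Equiv.coe_fn_mk]
    congr 1
    ext
    simp
    omega
  simp only [key]
  simp [Finset.mul_sum, two_mul]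

lemma wt_dmap_ell {N : ℕ} (a : Fin N → ZMod 2) : wt (dmap a + ellOne N) = N := by
  rw [wt_sum, ← Fintype.sum_equiv (pairEquiv N)
    (fun p => if (dmap a + ellOne N) (pairEquiv N p) ≠ 0 then 1 else 0) _ (fun p => rfl)]
  rw [Fintype.sum_prod_type]
  have keyd : ∀ (i : Fin N) (k : Fin 2), dmap a (pairEquiv N (i, k)) = a i := by
    intro i k
    have hk := k.isLt
    simp only [dmap, pairEquiv, Equiv.coe_fn_mk]
    congr 1
    ext
    simp
    omega
  have keyl : ∀ (i : Fin N) (k : Fin 2), ellOne N (pairEquiv N (i, k)) = if k.val = 0 then 1 else 0 := by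
    intro i k
    have hk := k.isLt
    simp only [ellOne, pairEquiv, Equiv.coe_fn_mk]
    have h2 : (2 * i.val + k.val) % 2 = k.val := by omega
    simp [h2]
  simp only [Pi.add_apply, keyd, keyl]
  have key : ∀ i : Fin N, (∑ k : Fin 2, if (a i + if k.val = 0 then 1 else 0) ≠ 0 then 1 else 0) = 1 := by
    intro i
    rw [Fin.sum_univ_two]
    rcases (show ∀ x : ZMod 2, x = 0 ∨ x = 1 from by decide) (a i) with h | h <;>
      simp [h] <;> decide
  simp only [key]
  simp

lemma dmap_add {N : ℕ} (a b : Fin N → ZMod 2) : dmap (a + b) = dmap a + dmap b := rfl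

lemma dmap_zero {N : ℕ} : dmap (0 : Fin N → ZMod 2) = 0 := rfl

lemma extDoubling_struct {N : ℕ} (E : Submodule (ZMod 2) (Fin N → ZMod 2))
    {w : Fin (2 * N) → ZMod 2} (hw : w ∈ ExtDoubling E) :
    ∃ a ∈ E, w = dmap a ∨ w = dmap a + ellOne N := by
  induction hw using Submodule.span_induction with
  | mem x hx =>
    rcases hx with h | ⟨a, ha, rfl⟩
    · exact ⟨0, E.zero_mem, Or.inr (by simp [h, dmap_zero])⟩
    · exact ⟨a, ha, Or.inl rfl⟩
  | zero => exact ⟨0, E.zero_mem, Or.inl (dmap_zero).symm⟩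
  | add x y _ _ hx hy =>
    obtain ⟨a, ha, hax⟩ := hx
    obtain ⟨b, hb, hby⟩ := hy
    have hll : ellOne N + ellOne N = 0 := by
      funext j; simp [ellOne]; split <;> decide
    rcases hax with rfl | rfl <;> rcases hby with rfl | rfl
    · exact ⟨a + b, E.add_mem ha hb, Or.inl (dmap_add a b)⟩
    · exact ⟨a + b, E.add_mem ha hb, Or.inr (by rw [dmap_add]; ring)⟩
    · exact ⟨a + b, E.add_mem ha hb, Or.inr (by rw [dmap_add]; ring)⟩
    · refine ⟨a + b, E.add_mem ha hb, Or.inl ?_⟩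
      rw [dmap_add]
      have : dmap a + ellOne N + (dmap b + ellOne N)
          = dmap a + dmap b + (ellOne N + ellOne N) := by ring
      rw [this, hll, add_zero]
  | smul c x _ hx =>
    obtain ⟨a, ha, hax⟩ := hx
    have hc : c = 0 ∨ c = 1 := by revert c; decide
    rcases hc with rfl | rfl
    · exact ⟨0, E.zero_mem, Or.inl (by simp [dmap_zero])⟩
    · exact ⟨a, ha, by simpa using hax⟩

/-- If E is a doubly even binary code of length 8n, then for all u, v in the extended
doubling 𝒟(E), the weight of u+v is divisible by 8. -/
theorem extDoubling_add_weight (n : ℕ)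
    (E : Submodule (ZMod 2) (Fin (8 * n) → ZMod 2)) (hE : DoublyEven E) :
    ∀ u ∈ ExtDoubling E, ∀ v ∈ ExtDoubling E, 8 ∣ wt (u + v) := by
  intro u hu v hv
  have hw : u + v ∈ ExtDoubling E := (ExtDoubling E).add_mem hu hv
  obtain ⟨a, ha, h | h⟩ := extDoubling_struct E hw <;> rw [h]
  · rw [wt_dmap]
    obtain ⟨k, hk⟩ := hE a ha
    exact ⟨k, by omega⟩
  · rw [wt_dmap_ell]
    exact ⟨n, rfl⟩
end

section
/- Let 𝒮 = 𝒮(S_1,S_2,P,Q,T,φ) be the maximal totally singular subspace of R^3 from Theorem 4.1 (case m-k_1-k_2 even). Then the number of non-zero vectors in 𝒮 of the form σ(a,0,0) with a singular and σ a coordinate permutation is exactly 2^{k_1} + 2^{k_2} - 2. -/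
open QuadraticMap Module Submodule

section
variable {R : Type*} [AddCommGroup R] [Module (ZMod 2) R]

def IsTotallySingular (Q : QuadraticForm (ZMod 2) R) (S : Submodule (ZMod 2) R) : Prop :=
  ∀ x ∈ S, Q x = 0

def QuadNonsingular (Q : QuadraticForm (ZMod 2) R) : Prop :=
  ∀ a : R, (∀ b : R, polar Q a b = 0) → a = 0

def IsPlusType (Q : QuadraticForm (ZMod 2) R) (m : ℕ) : Prop :=
  (∃ S : Submodule (ZMod 2) R, IsTotallySingular Q S ∧ Module.finrank (ZMod 2) S = m) ∧
  ∀ S : Submodule (ZMod 2) R, IsTotallySingular Q S → Module.finrank (ZMod 2) S ≤ m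

def orthComp (Q : QuadraticForm (ZMod 2) R) (A : Submodule (ZMod 2) R) :
    Submodule (ZMod 2) R where
  carrier := {x | ∀ a ∈ A, polar Q x a = 0}
  add_mem' := fun hx hy a ha => by
    rw [polar_add_left, hx a ha, hy a ha, add_zero]
  zero_mem' := fun a ha => by simp [polar]
  smul_mem' := fun c x hx a ha => by
    rw [polar_smul_left, hx a ha, smul_zero]

def NonsingularOn (Q : QuadraticForm (ZMod 2) R) (A : Submodule (ZMod 2) R) : Prop :=
  ∀ x ∈ A, (∀ y ∈ A, polar Q x y = 0) → x = 0

end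

section
variable {R : Type*} [AddCommGroup R] [Module (ZMod 2) R]

/-- The data of the construction 𝒮(S₁,S₂,P,Q,T,φ) of Theorem 4.1 (m - k₁ - k₂ even):
S₁ is a k₁-dimensional totally singular subspace, S₂ ⊆ S₁ is k₂-dimensional,
P is an (m-k₁-k₂)-dimensional non-singular subspace of S₁^⊥, Q is a complement of S₁ in
(S₁ ⊥ P)^⊥, T is a complement of S₂ in (S₂ ⊥ P)^⊥, and φ : T → U = Q^⊥ is an isomorphism
of quadratic spaces. -/
def EvenConstruction (Q : QuadraticForm (ZMod 2) R) (m k1 k2 : ℕ)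
    (S1 S2 P Qs T : Submodule (ZMod 2) R) (φ : R →ₗ[ZMod 2] R) : Prop :=
  IsTotallySingular Q S1 ∧ Module.finrank (ZMod 2) S1 = k1 ∧
  S2 ≤ S1 ∧ Module.finrank (ZMod 2) S2 = k2 ∧
  k1 + k2 ≤ m ∧ Even (m - k1 - k2) ∧
  P ≤ orthComp Q S1 ∧ NonsingularOn Q P ∧ Module.finrank (ZMod 2) P = m - k1 - k2 ∧
  Disjoint S1 Qs ∧ S1 ⊔ Qs = orthComp Q (S1 ⊔ P) ∧
  Disjoint S2 T ∧ S2 ⊔ T = orthComp Q (S2 ⊔ P) ∧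
  (∀ x ∈ T, Q (φ x) = Q x) ∧ Set.InjOn φ (T : Set R) ∧
  Submodule.map φ T = orthComp Q Qs

/-- The subspace 𝒮(S₁,S₂,P,Q,T,φ) of R³. -/
def SpanEven (S1 S2 P Qs T : Submodule (ZMod 2) R) (φ : R →ₗ[ZMod 2] R) :
    Submodule (ZMod 2) (Fin 3 → R) :=
  Submodule.span (ZMod 2)
    ({w | ∃ s ∈ S1, w = ![s, 0, 0]} ∪ {w | ∃ s ∈ S2, w = ![0, s, 0]} ∪
     {w | ∃ p ∈ P, w = ![p, p, 0]} ∪ {w | ∃ q ∈ Qs, w = ![q, 0, q]} ∪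
     {w | ∃ t ∈ T, w = ![0, t, φ t]})

end

section Aux
/-!
Write a vector of 𝒮 as `(a + p + q, b + p + t, q + φ t)` with `a ∈ S₁`, `b ∈ S₂`, `p ∈ P`,
`q ∈ Q`, `t ∈ T`. If the first coordinate vanishes, then `p = -(a + q)` lies in
`S₁ ⊕ Q = (S₁ ⊥ P)^⊥`, so `p` is orthogonal to the non-singular space `P` and vanishes, after
which `S₁ ∩ Q = 0` forces `a = q = 0`; the second coordinate behaves in the same way with
`S₂, T` in place of `S₁, Q`. Hence the vectors of 𝒮 with a single non-zero coordinate are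
exactly `(s, 0, 0)` with `0 ≠ s ∈ S₁` and `(0, s, 0)` with `0 ≠ s ∈ S₂`, all of them singular.
-/

section
variable {R : Type*} [AddCommGroup R] [Module (ZMod 2) R]

lemma eq_zero_of_add_add_eq_zero {Q : QuadraticForm (ZMod 2) R} {S W P : Submodule (ZMod 2) R}
    (hP : NonsingularOn Q P) (hdisj : Disjoint S W) (hsup : S ⊔ W = orthComp Q (S ⊔ P))
    {a p w : R} (ha : a ∈ S) (hp : p ∈ P) (hw : w ∈ W) (h : a + p + w = 0) :
    a = 0 ∧ p = 0 ∧ w = 0 := by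
  have hp_eq : p = -(a + w) := by linear_combination (norm := abel) h
  have hp0 : p = 0 := by
    have hp_orth : p ∈ orthComp Q (S ⊔ P) := by
      rw [← hsup, hp_eq]
      exact neg_mem (add_mem (mem_sup_left ha) (mem_sup_right hw))
    exact hP p hp fun y hy => hp_orth y (mem_sup_right hy)
  have ha_eq : a = -w := eq_neg_of_add_eq_zero_left (by simpa [hp0] using h)
  have ha0 : a = 0 := by simpa using hdisj.le_bot ⟨ha, ha_eq ▸ neg_mem hw⟩
  exact ⟨ha0, hp0, by simpa [ha0] using ha_eq.symm⟩

def spanEvenParam (φ : R →ₗ[ZMod 2] R) : (R × R × R × R × R) →ₗ[ZMod 2] (Fin 3 → R) where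
  toFun x := ![x.1 + x.2.2.1 + x.2.2.2.1, x.2.1 + x.2.2.1 + x.2.2.2.2, x.2.2.2.1 + φ x.2.2.2.2]
  map_add' x y := by
    funext i
    fin_cases i <;> simp <;> abel
  map_smul' c x := by
    funext i
    fin_cases i <;> simp [smul_add]

lemma spanEven_le_map (S1 S2 P Qs T : Submodule (ZMod 2) R) (φ : R →ₗ[ZMod 2] R) :
    SpanEven S1 S2 P Qs T φ ≤ (S1.prod (S2.prod (P.prod (Qs.prod T)))).map (spanEvenParam φ) := by
  rw [SpanEven, span_le]
  rintro w ((((⟨s, hs, rfl⟩ | ⟨s, hs, rfl⟩) | ⟨p, hp, rfl⟩) | ⟨q, hq, rfl⟩) | ⟨t, ht, rfl⟩)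
  · exact ⟨(s, 0, 0, 0, 0), ⟨hs, zero_mem _, zero_mem _, zero_mem _, zero_mem _⟩,
      by funext i; fin_cases i <;> simp [spanEvenParam]⟩
  · exact ⟨(0, s, 0, 0, 0), ⟨zero_mem _, hs, zero_mem _, zero_mem _, zero_mem _⟩,
      by funext i; fin_cases i <;> simp [spanEvenParam]⟩
  · exact ⟨(0, 0, p, 0, 0), ⟨zero_mem _, zero_mem _, hp, zero_mem _, zero_mem _⟩,
      by funext i; fin_cases i <;> simp [spanEvenParam]⟩
  · exact ⟨(0, 0, 0, q, 0), ⟨zero_mem _, zero_mem _, zero_mem _, hq, zero_mem _⟩,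
      by funext i; fin_cases i <;> simp [spanEvenParam]⟩
  · exact ⟨(0, 0, 0, 0, t), ⟨zero_mem _, zero_mem _, zero_mem _, zero_mem _, ht⟩,
      by funext i; fin_cases i <;> simp [spanEvenParam]⟩

lemma exists_of_mem_spanEven {S1 S2 P Qs T : Submodule (ZMod 2) R} {φ : R →ₗ[ZMod 2] R}
    {v : Fin 3 → R} (hv : v ∈ SpanEven S1 S2 P Qs T φ) :
    ∃ a ∈ S1, ∃ b ∈ S2, ∃ p ∈ P, ∃ q ∈ Qs, ∃ t ∈ T,
      v 0 = a + p + q ∧ v 1 = b + p + t ∧ v 2 = q + φ t := by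
  obtain ⟨⟨a, b, p, q, t⟩, ⟨ha, hb, hp, hq, ht⟩, rfl⟩ := spanEven_le_map S1 S2 P Qs T φ hv
  exact ⟨a, ha, b, hb, p, hp, q, hq, t, ht, rfl, rfl, rfl⟩

section
variable {Q : QuadraticForm (ZMod 2) R} {S1 S2 P Qs T : Submodule (ZMod 2) R}
  {φ : R →ₗ[ZMod 2] R} {v : Fin 3 → R}

lemma apply_two_eq_zero_of_mem_spanEven (hP : NonsingularOn Q P) (hdQ : Disjoint S1 Qs)
    (hsQ : S1 ⊔ Qs = orthComp Q (S1 ⊔ P)) (hdT : Disjoint S2 T)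
    (hsT : S2 ⊔ T = orthComp Q (S2 ⊔ P)) (hv : v ∈ SpanEven S1 S2 P Qs T φ)
    (h0 : v 0 = 0) (h1 : v 1 = 0) : v 2 = 0 := by
  obtain ⟨a, ha, b, hb, p, hp, q, hq, t, ht, hv0, hv1, hv2⟩ := exists_of_mem_spanEven hv
  obtain ⟨-, -, rfl⟩ := eq_zero_of_add_add_eq_zero hP hdQ hsQ ha hp hq (hv0 ▸ h0)
  obtain ⟨-, -, rfl⟩ := eq_zero_of_add_add_eq_zero hP hdT hsT hb hp ht (hv1 ▸ h1)
  simpa using hv2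

lemma apply_zero_mem_of_mem_spanEven (hP : NonsingularOn Q P) (hdT : Disjoint S2 T)
    (hsT : S2 ⊔ T = orthComp Q (S2 ⊔ P)) (hv : v ∈ SpanEven S1 S2 P Qs T φ)
    (h1 : v 1 = 0) (h2 : v 2 = 0) : v 0 ∈ S1 := by
  obtain ⟨a, ha, b, hb, p, hp, q, hq, t, ht, hv0, hv1, hv2⟩ := exists_of_mem_spanEven hv
  obtain ⟨-, rfl, rfl⟩ := eq_zero_of_add_add_eq_zero hP hdT hsT hb hp ht (hv1 ▸ h1)
  obtain rfl : q = 0 := by simpa [hv2] using h2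
  simpa [hv0] using ha

lemma apply_one_mem_of_mem_spanEven (hP : NonsingularOn Q P) (hdQ : Disjoint S1 Qs)
    (hsQ : S1 ⊔ Qs = orthComp Q (S1 ⊔ P)) (hφ : Set.InjOn φ T)
    (hv : v ∈ SpanEven S1 S2 P Qs T φ) (h0 : v 0 = 0) (h2 : v 2 = 0) : v 1 ∈ S2 := by
  obtain ⟨a, ha, b, hb, p, hp, q, hq, t, ht, hv0, hv1, hv2⟩ := exists_of_mem_spanEven hv
  obtain ⟨-, rfl, rfl⟩ := eq_zero_of_add_add_eq_zero hP hdQ hsQ ha hp hq (hv0 ▸ h0)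
  obtain rfl : t = 0 := hφ ht (zero_mem T) (by simpa [hv2] using h2)
  simpa [hv1] using hb

lemma setOf_mem_spanEven_single_support_eq (hS1 : IsTotallySingular Q S1) (hS21 : S2 ≤ S1)
    (hP : NonsingularOn Q P) (hdQ : Disjoint S1 Qs) (hsQ : S1 ⊔ Qs = orthComp Q (S1 ⊔ P))
    (hdT : Disjoint S2 T) (hsT : S2 ⊔ T = orthComp Q (S2 ⊔ P)) (hφ : Set.InjOn φ T) :
    {v : Fin 3 → R | v ∈ SpanEven S1 S2 P Qs T φ ∧
      ∃ i : Fin 3, v i ≠ 0 ∧ Q (v i) = 0 ∧ ∀ j : Fin 3, j ≠ i → v j = 0} =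
      (fun s : R => ![s, 0, 0]) '' ((S1 : Set R) \ {0}) ∪
      (fun s : R => ![0, s, 0]) '' ((S2 : Set R) \ {0}) := by
  ext v
  constructor
  · rintro ⟨hv, i, hvi, -, hz⟩
    fin_cases i
    · have h1 := hz 1 (by decide)
      have h2 := hz 2 (by decide)
      refine Or.inl ⟨v 0, ⟨apply_zero_mem_of_mem_spanEven hP hdT hsT hv h1 h2, hvi⟩, ?_⟩
      funext j; fin_cases j <;> simp [h1, h2]
    · have h0 := hz 0 (by decide)
      have h2 := hz 2 (by decide)
      refine Or.inr ⟨v 1, ⟨apply_one_mem_of_mem_spanEven hP hdQ hsQ hφ hv h0 h2, hvi⟩, ?_⟩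
      funext j; fin_cases j <;> simp [h0, h2]
    · exact absurd (apply_two_eq_zero_of_mem_spanEven hP hdQ hsQ hdT hsT hv
        (hz 0 (by decide)) (hz 1 (by decide))) hvi
  · rintro (⟨s, ⟨hs, hs0⟩, rfl⟩ | ⟨s, ⟨hs, hs0⟩, rfl⟩)
    · refine ⟨subset_span (Or.inl (Or.inl (Or.inl (Or.inl ⟨s, hs, rfl⟩)))),
        0, hs0, hS1 s hs, ?_⟩
      intro j hj
      fin_cases j <;> simp_all
    · refine ⟨subset_span (Or.inl (Or.inl (Or.inl (Or.inr ⟨s, hs, rfl⟩)))),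
        1, hs0, hS1 s (hS21 hs), ?_⟩
      intro j hj
      fin_cases j <;> simp_all

end

lemma ncard_submodule_diff_zero {K V : Type*} [Field K] [Fintype K] [AddCommGroup V]
    [Module K V] [Finite V] (S : Submodule K V) :
    ((S : Set V) \ {0}).ncard = Fintype.card K ^ finrank K S - 1 := by
  have : Fintype S := Fintype.ofFinite S
  rw [Set.ncard_sdiff_singleton_of_mem S.zero_mem, ← Nat.card_coe_set_eq, SetLike.coe_sort_coe,
    Nat.card_eq_fintype_card, card_eq_pow_finrank (K := K)]

lemma ncard_image_union_image_submodule_diff_zero [Finite R]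
    (S1 S2 : Submodule (ZMod 2) R) :
    ((fun s : R => ![s, 0, 0]) '' ((S1 : Set R) \ {0}) ∪
      (fun s : R => ![0, s, 0]) '' ((S2 : Set R) \ {0})).ncard =
      2 ^ finrank (ZMod 2) S1 + 2 ^ finrank (ZMod 2) S2 - 2 := by
  have hinj0 : Function.Injective (fun s : R => ![s, 0, 0]) := fun x y hxy => by
    simpa using congrFun hxy 0
  have hinj1 : Function.Injective (fun s : R => ![0, s, 0]) := fun x y hxy => by
    simpa using congrFun hxy 1
  have hdisj : Disjoint ((fun s : R => ![s, 0, 0]) '' ((S1 : Set R) \ {0}))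
      ((fun s : R => ![0, s, 0]) '' ((S2 : Set R) \ {0})) := by
    rw [Set.disjoint_left]
    rintro - ⟨s, ⟨-, hs0⟩, rfl⟩ ⟨u, -, hus⟩
    exact hs0 (by simpa using (congrFun hus 0).symm)
  rw [Set.ncard_union_eq hdisj (Set.toFinite _) (Set.toFinite _),
    Set.ncard_image_of_injective _ hinj0, Set.ncard_image_of_injective _ hinj1,
    ncard_submodule_diff_zero, ncard_submodule_diff_zero, ZMod.card]
  have := @Nat.one_le_two_pow (finrank (ZMod 2) S1)
  have := @Nat.one_le_two_pow (finrank (ZMod 2) S2)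
  omega

end

theorem spanEven_count_single_support_general {R : Type*} [AddCommGroup R] [Module (ZMod 2) R]
    [FiniteDimensional (ZMod 2) R] (m k1 k2 : ℕ)
    (Q : QuadraticForm (ZMod 2) R)
    (S1 S2 P Qs T : Submodule (ZMod 2) R) (φ : R →ₗ[ZMod 2] R)
    (h : EvenConstruction Q m k1 k2 S1 S2 P Qs T φ) :
    Nat.card {v : Fin 3 → R | v ∈ SpanEven S1 S2 P Qs T φ ∧
      ∃ i : Fin 3, v i ≠ 0 ∧ Q (v i) = 0 ∧ ∀ j : Fin 3, j ≠ i → v j = 0} =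
    2 ^ k1 + 2 ^ k2 - 2 := by
  obtain ⟨hS1, rfl, hS21, rfl, -, -, -, hP, -, hdQ, hsQ, hdT, hsT, -, hφ, -⟩ := h
  have : Finite R := Module.finite_of_finite (ZMod 2)
  rw [Nat.card_coe_set_eq,
    setOf_mem_spanEven_single_support_eq hS1 hS21 hP hdQ hsQ hdT hsT hφ,
    ncard_image_union_image_submodule_diff_zero]

/-- The number of non-zero vectors in 𝒮(S₁,S₂,P,Q,T,φ) supported in a single coordinate
(with that coordinate a non-zero singular vector) is 2^k₁ + 2^k₂ - 2. -/
theorem spanEven_count_single_support {R : Type*} [AddCommGroup R] [Module (ZMod 2) R]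
    [FiniteDimensional (ZMod 2) R] (m k1 k2 : ℕ)
    (Q : QuadraticForm (ZMod 2) R) (hdim : Module.finrank (ZMod 2) R = 2 * m)
    (hns : QuadNonsingular Q) (htype : IsPlusType Q m)
    (S1 S2 P Qs T : Submodule (ZMod 2) R) (φ : R →ₗ[ZMod 2] R)
    (h : EvenConstruction Q m k1 k2 S1 S2 P Qs T φ) :
    Nat.card {v : Fin 3 → R | v ∈ SpanEven S1 S2 P Qs T φ ∧
      ∃ i : Fin 3, v i ≠ 0 ∧ Q (v i) = 0 ∧ ∀ j : Fin 3, j ≠ i → v j = 0} =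
    2 ^ k1 + 2 ^ k2 - 2 :=
  spanEven_count_single_support_general m k1 k2 Q S1 S2 P Qs T φ h
end Aux
end

section
/- Let S_1 be a 5-dimensional (maximal) totally singular subspace of a non-singular 10-dimensional plus-type quadratic space (R,q) over F_2, and let d(𝒮) count, over vectors v in 𝒮 = Span{(a,0,0),(0,b,b) : a ∈ S_1, b ∈ R} ⊆ R^3, the quantity 8 for each v with exactly one non-zero coordinate which is singular non-zero, 1 for each v with exactly two non-zero coordinates both non-singular, and 0 otherwise. Then d(𝒮) = 744. -/
open QuadraticMap Module Submodule

/-!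
The vectors of `𝒮` are exactly the `![a, b, b]` with `a ∈ S₁`, so the vectors of weight 8 are
the `![a, 0, 0]` with `0 ≠ a ∈ S₁` (there are `2⁵ - 1 = 31`, as `S₁` is totally singular), and
those of weight 1 are the `![0, b, b]` with `q b = 1`. The polar form is nondegenerate and
`dim S₁ = 10 / 2`, so `S₁` is its own orthogonal. Hence for `x ∉ S₁` the map
`s ↦ q (x + s) = q x + polar q x s` on `S₁` is affine and non-constant, so it takes the value 1
on exactly half of `S₁`, while for `x ∈ S₁` it vanishes. Double counting the pairs `(x, s)` with
`q (x + s) = 1` gives `2 · #{q = 1} = |R| - |S₁| = 992`, so `d(𝒮) = 8 · 31 + 496 = 744`.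
-/

open Finset

lemma AddMonoidHom.two_mul_card_fiber_eq_card {G : Type*} [AddGroup G] [Finite G]
    (φ : G →+ ZMod 2) (hφ : φ ≠ 0) (c : ZMod 2) :
    2 * Nat.card {g // φ g = c} = Nat.card G := by
  classical
  cases nonempty_fintype G
  obtain ⟨g₁, hg₁⟩ := DFunLike.ne_iff.mp hφ
  have hsurj (d : ZMod 2) : d ∈ Set.range φ := by
    fin_cases d
    · exact ⟨0, map_zero φ⟩
    · exact ⟨g₁, (show ∀ a : ZMod 2, a ≠ 0 → a = 1 by decide) _ hg₁⟩
  rw [Nat.card_eq_fintype_card, Fintype.card_subtype, Nat.card_eq_fintype_card]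
  calc 2 * #{g | φ g = c}
      = ∑ d : ZMod 2, #{g | φ g = d} := by
        rw [sum_const_nat fun d _ =>
          AddMonoidHom.card_fiber_eq_of_mem_range φ (hsurj d) (hsurj c)]
        rfl
    _ = Fintype.card G := (card_eq_sum_card_fiberwise fun _ _ => mem_univ _).symm

section QuadraticForm

variable {R : Type*} [AddCommGroup R] [Module (ZMod 2) R] {Q : QuadraticForm (ZMod 2) R}
  {S : Submodule (ZMod 2) R}

lemma IsTotallySingular.le_orthComp (hS : IsTotallySingular Q S) : S ≤ orthComp Q S :=
  fun x hx s hs => by rw [polar, hS _ (add_mem hx hs), hS x hx, hS s hs, sub_zero, sub_zero]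

lemma orthComp_eq_orthogonal_polarBilin (A : Submodule (ZMod 2) R) :
    orthComp Q A = LinearMap.BilinForm.orthogonal (polarBilin Q) A := by
  ext x
  exact forall₂_congr fun a _ => by rw [polarBilin_apply_apply, polar_comm]

lemma QuadNonsingular.nondegenerate_polarBilin (hns : QuadNonsingular Q) :
    (polarBilin Q).Nondegenerate :=
  ⟨fun x hx => hns x hx, fun x hx => hns x fun b => by rw [polar_comm]; exact hx b⟩

lemma IsTotallySingular.orthComp_eq_self [FiniteDimensional (ZMod 2) R]
    (hns : QuadNonsingular Q) (hS : IsTotallySingular Q S)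
    (hdim : finrank (ZMod 2) R = 2 * finrank (ZMod 2) S) : orthComp Q S = S := by
  refine (eq_of_le_of_finrank_le hS.le_orthComp ?_).symm
  rw [orthComp_eq_orthogonal_polarBilin,
    LinearMap.BilinForm.finrank_orthogonal hns.nondegenerate_polarBilin, hdim]
  omega

variable [Finite R]

lemma IsTotallySingular.two_mul_card_map_add_eq_one (hS : IsTotallySingular Q S)
    (hperp : orthComp Q S ≤ S) {x : R} (hx : x ∉ S) :
    2 * Nat.card {s : S // Q (x + s) = 1} = Nat.card S := by
  let φ : S →+ ZMod 2 := ((polarBilin Q x).comp S.subtype).toAddMonoidHom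
  have hφ : φ ≠ 0 := by
    contrapose! hx
    exact hperp fun s hs => DFunLike.congr_fun hx ⟨s, hs⟩
  rw [← φ.two_mul_card_fiber_eq_card hφ (1 + Q x)]
  congr 1
  refine Nat.card_congr (Equiv.subtypeEquivRight fun s => ?_)
  rw [QuadraticMap.map_add Q, hS s s.2, add_zero]
  exact (show ∀ a b : ZMod 2, a + b = 1 ↔ b = 1 + a by decide) _ _

lemma IsTotallySingular.two_mul_card_setOf_eq_one_add_card (hS : IsTotallySingular Q S)
    (hperp : orthComp Q S ≤ S) :
    2 * Nat.card {x : R // Q x = 1} + Nat.card S = Nat.card R := by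
  classical
  cases nonempty_fintype R
  simp only [Nat.card_eq_fintype_card, Fintype.card_subtype]
  set N := #{x : R | Q x = 1}
  have htranslate (s : S) : #{x : R | Q (x + s) = 1} = N :=
    card_equiv (Equiv.addRight (s : R)) (by simp)
  have hfiber (x : R) :
      2 * #{s : S | Q (x + s) = 1} = if x ∈ S then 0 else Fintype.card S := by
    split_ifs with hx
    · simp [hS _ (add_mem hx _)]
    · rw [← Fintype.card_subtype, ← Nat.card_eq_fintype_card, ← Nat.card_eq_fintype_card]
      exact hS.two_mul_card_map_add_eq_one hperp hx
  have hdouble : Fintype.card S * (2 * N) = #{x : R | x ∉ S} * Fintype.card S :=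
    calc Fintype.card S * (2 * N)
        = 2 * ∑ s : S, #{x : R | Q (x + s) = 1} := by
          rw [sum_congr rfl fun s _ => htranslate s, sum_const, card_univ, smul_eq_mul]
          ring
      _ = ∑ x : R, 2 * #{s : S | Q (x + s) = 1} := by
          simp only [card_filter, mul_sum]
          rw [sum_comm]
      _ = #{x : R | x ∉ S} * Fintype.card S := by
          simp only [hfiber, sum_ite, sum_const_zero, zero_add, sum_const, smul_eq_mul]
  have hsplit : #{x : R | x ∉ S} + Fintype.card S = Fintype.card R := by
    rw [Fintype.card_subtype, add_comm, card_filter_add_card_filter_not, card_univ]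
  rw [← hsplit, Nat.eq_of_mul_eq_mul_left Fintype.card_pos (hdouble.trans (mul_comm _ _)),
    Fintype.card_subtype]

end QuadraticForm

section AxisDiagonal

variable {R : Type*} [AddCommGroup R] [Module (ZMod 2) R] (S1 : Submodule (ZMod 2) R)

lemma mem_span_axis_diag_iff {v : Fin 3 → R} :
    v ∈ span (ZMod 2) ({w | ∃ a ∈ S1, w = ![a, 0, 0]} ∪ {w | ∃ b : R, w = ![0, b, b]}) ↔
      ∃ a ∈ S1, ∃ b, v = ![a, b, b] := by
  constructor
  · intro hv
    induction hv using span_induction with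
    | mem w hw =>
      rcases hw with ⟨a, ha, rfl⟩ | ⟨b, rfl⟩
      · exact ⟨a, ha, 0, rfl⟩
      · exact ⟨0, S1.zero_mem, b, rfl⟩
    | zero => exact ⟨0, S1.zero_mem, 0, by ext i; fin_cases i <;> rfl⟩
    | add x y _ _ hx hy =>
      obtain ⟨a, ha, b, rfl⟩ := hx
      obtain ⟨a', ha', b', rfl⟩ := hy
      exact ⟨a + a', add_mem ha ha', b + b', by simp⟩
    | smul c x _ hx =>
      obtain ⟨a, ha, b, rfl⟩ := hx
      exact ⟨c • a, S1.smul_mem c ha, c • b, by simp⟩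
  · rintro ⟨a, ha, b, rfl⟩
    have hsplit : ![a, b, b] = ![a, 0, 0] + ![0, b, b] := by simp
    rw [hsplit]
    exact add_mem (subset_span (Or.inl ⟨a, ha, rfl⟩)) (subset_span (Or.inr ⟨b, rfl⟩))

variable {Q : QuadraticForm (ZMod 2) R}

lemma setOf_mem_span_singular_axis_eq (hS1 : IsTotallySingular Q S1) :
    {v : Fin 3 → R |
        v ∈ span (ZMod 2) ({w | ∃ a ∈ S1, w = ![a, 0, 0]} ∪ {w | ∃ b : R, w = ![0, b, b]}) ∧
        ∃ i : Fin 3, v i ≠ 0 ∧ Q (v i) = 0 ∧ ∀ j : Fin 3, j ≠ i → v j = 0} =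
      (fun a => ![a, 0, 0]) '' ((S1 : Set R) \ {0}) := by
  ext v
  simp only [Set.mem_ofPred_eq, mem_span_axis_diag_iff, Set.mem_image, Set.mem_sdiff,
    SetLike.mem_coe, Set.mem_singleton_iff]
  constructor
  · rintro ⟨⟨a, ha, b, rfl⟩, i, hi⟩
    fin_cases i <;> simp [Fin.forall_fin_succ] at hi ⊢ <;> grind
  · rintro ⟨a, ⟨ha, ha0⟩, rfl⟩
    refine ⟨⟨a, ha, 0, rfl⟩, 0, ?_⟩
    simp [Fin.forall_fin_succ, ha0, hS1 a ha]

lemma setOf_mem_span_nonsingular_pair_eq :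
    {v : Fin 3 → R |
        v ∈ span (ZMod 2) ({w | ∃ a ∈ S1, w = ![a, 0, 0]} ∪ {w | ∃ b : R, w = ![0, b, b]}) ∧
        ∃ i : Fin 3, v i = 0 ∧ ∀ j : Fin 3, j ≠ i → v j ≠ 0 ∧ Q (v j) = 1} =
      (fun b => ![0, b, b]) '' {b | Q b = 1} := by
  ext v
  simp only [Set.mem_ofPred_eq, mem_span_axis_diag_iff, Set.mem_image]
  constructor
  · rintro ⟨⟨a, ha, b, rfl⟩, i, hi⟩
    fin_cases i <;> simp [Fin.forall_fin_succ] at hi ⊢ <;> grind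
  · rintro ⟨b, hb, rfl⟩
    have hb0 : b ≠ 0 := by
      rintro rfl
      simp at hb
    refine ⟨⟨0, S1.zero_mem, b, rfl⟩, 0, ?_⟩
    simp [Fin.forall_fin_succ, hb, hb0]

end AxisDiagonal

theorem d_count_744_general {R : Type*} [AddCommGroup R] [Module (ZMod 2) R]
    (Q : QuadraticForm (ZMod 2) R) (hdim : Module.finrank (ZMod 2) R = 10)
    (hns : QuadNonsingular Q)
    (S1 : Submodule (ZMod 2) R) (hS1 : IsTotallySingular Q S1)
    (hS1d : Module.finrank (ZMod 2) S1 = 5) :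
    8 * Nat.card {v : Fin 3 → R |
        v ∈ Submodule.span (ZMod 2)
          ({w | ∃ a ∈ S1, w = ![a, 0, 0]} ∪ {w | ∃ b : R, w = ![0, b, b]}) ∧
        ∃ i : Fin 3, v i ≠ 0 ∧ Q (v i) = 0 ∧ ∀ j : Fin 3, j ≠ i → v j = 0} +
    Nat.card {v : Fin 3 → R |
        v ∈ Submodule.span (ZMod 2)
          ({w | ∃ a ∈ S1, w = ![a, 0, 0]} ∪ {w | ∃ b : R, w = ![0, b, b]}) ∧
        ∃ i : Fin 3, v i = 0 ∧ ∀ j : Fin 3, j ≠ i → v j ≠ 0 ∧ Q (v j) = 1} = 744 := by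
  have : FiniteDimensional (ZMod 2) R := Module.finite_of_finrank_pos (by omega)
  have : Finite R := Module.finite_of_finite (ZMod 2)
  have hcardR : Nat.card R = 2 ^ 10 := by
    rw [Module.natCard_eq_pow_finrank (K := ZMod 2), hdim, Nat.card_zmod]
  have hcardS1 : Nat.card S1 = 2 ^ 5 := by
    rw [Module.natCard_eq_pow_finrank (K := ZMod 2), hS1d, Nat.card_zmod]
  have hperp : orthComp Q S1 ≤ S1 := (hS1.orthComp_eq_self hns (by omega)).le
  have hnonsing := hS1.two_mul_card_setOf_eq_one_add_card hperp
  have hinj₁ : Function.Injective fun a : R => ![a, 0, 0] := fun a b h => congrFun h 0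
  have hinj₂ : Function.Injective fun b : R => ![0, b, b] := fun a b h => congrFun h 1
  rw [setOf_mem_span_singular_axis_eq S1 hS1, setOf_mem_span_nonsingular_pair_eq S1,
    Nat.card_image_of_injective hinj₁, Nat.card_image_of_injective hinj₂,
    Nat.card_coe_set_eq, Set.ncard_sdiff_singleton_of_mem S1.zero_mem, ← Nat.card_coe_set_eq,
    SetLike.coe_sort_coe, Set.coe_ofPred]
  omega

/-- For 𝒮 = Span{(a,0,0),(0,b,b) : a ∈ S₁, b ∈ R} ⊆ R³, with S₁ a maximal (5-dimensional)
totally singular subspace of a non-singular 10-dimensional plus-type quadratic space (R,q)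
over F₂, the weighted count d(𝒮) (8 for each vector supported in a single coordinate with
that coordinate singular non-zero, 1 for each vector with exactly two non-zero coordinates
both non-singular) equals 744. -/
theorem d_count_744 {R : Type*} [AddCommGroup R] [Module (ZMod 2) R]
    [FiniteDimensional (ZMod 2) R]
    (Q : QuadraticForm (ZMod 2) R) (hdim : Module.finrank (ZMod 2) R = 10)
    (hns : QuadNonsingular Q) (htype : IsPlusType Q 5)
    (S1 : Submodule (ZMod 2) R) (hS1 : IsTotallySingular Q S1)
    (hS1d : Module.finrank (ZMod 2) S1 = 5) :
    8 * Nat.card {v : Fin 3 → R |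
        v ∈ Submodule.span (ZMod 2)
          ({w | ∃ a ∈ S1, w = ![a, 0, 0]} ∪ {w | ∃ b : R, w = ![0, b, b]}) ∧
        ∃ i : Fin 3, v i ≠ 0 ∧ Q (v i) = 0 ∧ ∀ j : Fin 3, j ≠ i → v j = 0} +
    Nat.card {v : Fin 3 → R |
        v ∈ Submodule.span (ZMod 2)
          ({w | ∃ a ∈ S1, w = ![a, 0, 0]} ∪ {w | ∃ b : R, w = ![0, b, b]}) ∧
        ∃ i : Fin 3, v i = 0 ∧ ∀ j : Fin 3, j ≠ i → v j ≠ 0 ∧ Q (v j) = 1} = 744 :=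
  d_count_744_general Q hdim hns S1 hS1 hS1d
end
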